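/- arXiv:1311.5648 — 5 statements merged into one kernel-verified Lean document; each statement's English description precedes it below -/
import Mathlib

section
/- Let (X, Y, λ, q, α) be a Wall pairing of rank g, and let Y' ⊆ Y be any complement of the torsion subgroup Torsion(Y) in Y (i.e., Y = Y' ⊕ Torsion(Y)). Then the map Torsion(Y) → Hom(Y', ℤ/2) sending z to q(z, ·)|_{Y'} is a group isomorphism. -/
/-!
Writing a torsion element as `z = ∑ cᵢ zᵢ`, one has `q(z, yⱼ) = cⱼ`, and `q` vanishes on
`Torsion(Y) × Torsion(Y)`. Since a homomorphism `Y → ℤ/2` killing the torsion is determined by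
its values on the `yᵢ`, `z ↦ q(z, ·)` identifies `Torsion(Y)` with the homomorphisms that kill
`Torsion(Y)`, and restriction to the complement `Y'` identifies these with `Hom(Y', ℤ/2)`.
-/

/-- A Wall pairing of rank `g`.  `X` is a free `ℤ`-module of rank `g` (with chosen
basis `bX`), `Y ≅ ℤ^g ⊕ (ℤ/2)^g` via `eY` (the images of the standard generators are the
`y_i = eY (Pi.single i 1, 0)` and `z_i = eY (0, Pi.single i 1)`, the latter forming a basis of the
torsion subgroup), `lam` is the bilinear pairing, `qf` the symmetric bilinear form, and `alpha`
a quadratic-type refinement valued in an abelian group `A` with homomorphism `bd : ℤ/2 → A`. -/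
structure WallPairing (g : ℕ) (X Y A : Type) [AddCommGroup X] [AddCommGroup Y]
    [AddCommGroup A] where
  lam : X →+ Y →+ ℤ
  qf : Y →+ Y →+ ZMod 2
  qf_symm : ∀ a b : Y, qf a b = qf b a
  bd : ZMod 2 →+ A
  alpha : Y → A
  alpha_add : ∀ a b : Y, alpha (a + b) = alpha a + alpha b + bd (qf a b)
  bX : Module.Basis (Fin g) ℤ X
  eY : ((Fin g → ℤ) × (Fin g → ZMod 2)) ≃+ Y
  lam_xy : ∀ i j, lam (bX i) (eY (Pi.single j 1, 0)) = if i = j then 1 else 0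
  lam_xz : ∀ i j, lam (bX i) (eY (0, Pi.single j 1)) = 0
  q_yz : ∀ i j, qf (eY (Pi.single i 1, 0)) (eY (0, Pi.single j 1)) = if i = j then 1 else 0
  q_yy : ∀ i j, qf (eY (Pi.single i 1, 0)) (eY (Pi.single j 1, 0)) = 0
  q_zz : ∀ i j, qf (eY (0, Pi.single i 1)) (eY (0, Pi.single j 1)) = 0
  alpha_y : ∀ i, alpha (eY (Pi.single i 1, 0)) = 0
  alpha_z : ∀ i, alpha (eY (0, Pi.single i 1)) = 0

theorem AddSubgroup.bijOn_comp_subtype_of_isCompl {Y M : Type*} [AddCommGroup Y]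
    [AddCommGroup M] {Y' T : AddSubgroup Y} (h : IsCompl Y' T) :
    Set.BijOn (fun ψ : Y →+ M => ψ.comp Y'.subtype) {ψ | T ≤ ψ.ker} Set.univ := by
  refine ⟨fun _ _ => trivial, ?_, ?_⟩
  · intro ψ₁ hψ₁ ψ₂ hψ₂ heq
    have hker : Y' ⊔ T ≤ (ψ₁ - ψ₂).ker := sup_le
      (fun y hy => sub_eq_zero.mpr (DFunLike.congr_fun heq ⟨y, hy⟩))
      (fun t ht => by simp [(ψ₁.mem_ker).mp (hψ₁ ht), (ψ₂.mem_ker).mp (hψ₂ ht)])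
    rw [h.sup_eq_top] at hker
    ext y
    exact sub_eq_zero.mp (hker (AddSubgroup.mem_top y))
  · intro φ _
    have hZ := AddSubgroup.toIntSubmodule.isCompl h
    let ψ := LinearMap.ofIsCompl hZ φ.toIntLinearMap 0
    refine ⟨ψ.toAddMonoidHom, fun t ht => ?_, ?_⟩
    · exact LinearMap.ofIsCompl_apply_right hZ ⟨t, ht⟩
    · ext y
      exact LinearMap.ofIsCompl_apply_left hZ y

namespace WallPairing

variable {g : ℕ} {X Y A : Type} [AddCommGroup X] [AddCommGroup Y] [AddCommGroup A]
  (W : WallPairing g X Y A)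

theorem eY_mem_torsion_iff (p : (Fin g → ℤ) × (Fin g → ZMod 2)) :
    W.eY p ∈ AddCommGroup.torsion Y ↔ p.1 = 0 := by
  change p ∈ (AddCommGroup.torsion Y).comap (W.eY : _ →+ Y) ↔ _
  rw [W.eY.comap_torsion, AddCommGroup.mem_torsion, IsOfFinAddOrder.prod_iff,
    isOfFinAddOrder_iff_eq_zero]
  exact and_iff_left (isOfFinAddOrder_of_finite p.2)

theorem exists_eY_zero_eq_of_mem_torsion {t : Y} (ht : t ∈ AddCommGroup.torsion Y) :
    ∃ c, W.eY (0, c) = t := by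
  rw [← W.eY.apply_symm_apply t, eY_mem_torsion_iff] at ht
  refine ⟨(W.eY.symm t).2, ?_⟩
  rw [← ht, W.eY.apply_symm_apply]

theorem eY_eq_sum (p : (Fin g → ℤ) × (Fin g → ZMod 2)) :
    W.eY p = ∑ i, p.1 i • W.eY (Pi.single i 1, 0) +
      ∑ i, (p.2 i).val • W.eY (0, Pi.single i 1) := by
  simp only [← map_zsmul, ← map_nsmul, ← map_sum, ← map_add]
  congr 1
  ext j <;>
    simp [Prod.fst_sum, Prod.snd_sum, Finset.sum_apply, Pi.single_apply, -nsmul_eq_mul]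

theorem qf_eY_zero_eY_zero (c c' : Fin g → ZMod 2) : W.qf (W.eY (0, c)) (W.eY (0, c')) = 0 := by
  simp [W.eY_eq_sum (0, c), W.eY_eq_sum (0, c'), W.q_zz]

theorem torsion_le_ker_qf {z : Y} (hz : z ∈ AddCommGroup.torsion Y) :
    AddCommGroup.torsion Y ≤ (W.qf z).ker := by
  intro t ht
  obtain ⟨c, rfl⟩ := W.exists_eY_zero_eq_of_mem_torsion hz
  obtain ⟨c', rfl⟩ := W.exists_eY_zero_eq_of_mem_torsion ht
  exact W.qf_eY_zero_eY_zero c c'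

theorem qf_eY_zero_eY_single (c : Fin g → ZMod 2) (j : Fin g) :
    W.qf (W.eY (0, c)) (W.eY (Pi.single j 1, 0)) = c j := by
  rw [W.qf_symm]
  simp [W.eY_eq_sum (0, c), W.q_yz]

theorem hom_ext_of_torsion_le_ker {M : Type*} [AddCommGroup M] {φ ψ : Y →+ M}
    (hφ : AddCommGroup.torsion Y ≤ φ.ker) (hψ : AddCommGroup.torsion Y ≤ ψ.ker)
    (h : ∀ i, φ (W.eY (Pi.single i 1, 0)) = ψ (W.eY (Pi.single i 1, 0))) : φ = ψ := by
  have hz (i : Fin g) : W.eY (0, Pi.single i 1) ∈ AddCommGroup.torsion Y :=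
    (W.eY_mem_torsion_iff _).mpr rfl
  ext t
  rw [← W.eY.apply_symm_apply t, W.eY_eq_sum]
  simp [h, φ.mem_ker.mp (hφ (hz _)), ψ.mem_ker.mp (hψ (hz _))]

theorem bijOn_qf_torsion :
    Set.BijOn (fun z : AddCommGroup.torsion Y => W.qf z) Set.univ
      {ψ | AddCommGroup.torsion Y ≤ ψ.ker} := by
  refine ⟨fun z _ => W.torsion_le_ker_qf z.2, ?_, ?_⟩
  · rintro ⟨z₁, hz₁⟩ - ⟨z₂, hz₂⟩ - h
    obtain ⟨c₁, rfl⟩ := W.exists_eY_zero_eq_of_mem_torsion hz₁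
    obtain ⟨c₂, rfl⟩ := W.exists_eY_zero_eq_of_mem_torsion hz₂
    have hc : c₁ = c₂ := funext fun j => by
      simpa [qf_eY_zero_eY_single] using DFunLike.congr_fun h (W.eY (Pi.single j 1, 0))
    subst hc
    rfl
  · intro ψ hψ
    let c : Fin g → ZMod 2 := fun i => ψ (W.eY (Pi.single i 1, 0))
    have hc : W.eY (0, c) ∈ AddCommGroup.torsion Y := (W.eY_mem_torsion_iff _).mpr rfl
    exact ⟨⟨_, hc⟩, trivial,
      W.hom_ext_of_torsion_le_ker (W.torsion_le_ker_qf hc) hψ (W.qf_eY_zero_eY_single c)⟩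

end WallPairing

/-- If `Y'` is any complement of the torsion subgroup of `Y`, then
`Torsion(Y) → Hom(Y', ℤ/2)`, `z ↦ q(z,·)|_{Y'}` is a group isomorphism. -/
theorem wallPairing_q_perfect_on_torsion {g : ℕ} {X Y A : Type} [AddCommGroup X]
    [AddCommGroup Y] [AddCommGroup A] (W : WallPairing g X Y A)
    (Y' : AddSubgroup Y) (hY' : IsCompl Y' (AddCommGroup.torsion Y)) :
    Function.Bijective
      (fun z : AddCommGroup.torsion Y => (W.qf (z : Y)).comp Y'.subtype) :=
  Set.bijOn_univ.mp <|
    (AddSubgroup.bijOn_comp_subtype_of_isCompl hY').comp W.bijOn_qf_torsion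
end

section
/- Let (X, Y, λ, q, α) be a Wall pairing of rank g. Then there exists a unique group homomorphism ρ : X → Torsion(Y) such that q(ρ(x), y) equals the reduction of λ(x, y) modulo 2 for all (x, y) ∈ X × Y. -/
theorem AddMonoidHom.ext_pi_int_prod_pi_zmod {ι M : Type*} [DecidableEq ι] [Finite ι]
    [AddCommGroup M] {n : ℕ} {F F' : ((ι → ℤ) × (ι → ZMod n)) →+ M}
    (h₁ : ∀ i, F (Pi.single i 1, 0) = F' (Pi.single i 1, 0))
    (h₂ : ∀ i, F (0, Pi.single i 1) = F' (0, Pi.single i 1)) : F = F' := by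
  rw [← F.coprod_unique, ← F'.coprod_unique]
  congr 1
  · refine AddMonoidHom.functions_ext' _ _ _ fun i => AddMonoidHom.ext_int ?_
    simpa using h₁ i
  · refine AddMonoidHom.functions_ext' _ _ _ fun i =>
      (AddMonoidHom.cancel_right ZMod.intCast_surjective (f := Int.castAddHom (ZMod n))).1
        (AddMonoidHom.ext_int ?_)
    simpa using h₂ i

namespace WallPairing

variable {g : ℕ} {X Y A : Type} [AddCommGroup X] [AddCommGroup Y] [AddCommGroup A]
  (W : WallPairing g X Y A)

def y (i : Fin g) : Y := W.eY (Pi.single i 1, 0)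

def z (i : Fin g) : Y := W.eY (0, Pi.single i 1)

theorem z_mem_torsion (i : Fin g) : W.z i ∈ AddCommGroup.torsion Y := by
  refine isOfFinAddOrder_iff_nsmul_eq_zero.2 ⟨2, two_pos, ?_⟩
  rw [z, ← map_nsmul, Prod.smul_mk, smul_zero, ← Pi.single_smul, two_nsmul,
    (by decide : (1 + 1 : ZMod 2) = 0), Pi.single_zero, Prod.mk_zero_zero, map_zero]

theorem addMonoidHom_ext {M : Type*} [AddCommGroup M] {f f' : Y →+ M}
    (hy : ∀ i, f (W.y i) = f' (W.y i)) (hz : ∀ i, f (W.z i) = f' (W.z i)) : f = f' :=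
  (AddMonoidHom.cancel_right W.eY.surjective).1 <|
    AddMonoidHom.ext_pi_int_prod_pi_zmod (F := f.comp W.eY.toAddMonoidHom) hy hz

theorem qf_y_eq_eY_symm_snd (j : Fin g) (b : Y) : W.qf (W.y j) b = (W.eY.symm b).2 j := by
  let coord : Y →+ ZMod 2 := (Pi.evalAddMonoidHom _ j).comp
    ((AddMonoidHom.snd _ _).comp W.eY.symm.toAddMonoidHom)
  refine DFunLike.congr_fun (W.addMonoidHom_ext (f := W.qf (W.y j)) (f' := coord) ?_ ?_) b
  · intro i
    simp [coord, y, W.q_yy]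
  · intro i
    simp [coord, y, z, W.q_yz, Pi.single_apply]

theorem qf_z_eq_lam (i : Fin g) (b : Y) : W.qf (W.z i) b = (W.lam (W.bX i) b : ZMod 2) := by
  refine DFunLike.congr_fun (W.addMonoidHom_ext (f := W.qf (W.z i))
    (f' := (Int.castAddHom (ZMod 2)).comp (W.lam (W.bX i))) ?_ ?_) b
  · intro j
    rw [W.qf_symm, y, z, W.q_yz]
    simp [W.lam_xy, eq_comm]
  · intro j
    simp [z, W.q_zz, W.lam_xz]

theorem eq_zero_of_mem_torsion_of_qf_eq_zero {t : Y} (ht : t ∈ AddCommGroup.torsion Y)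
    (hq : ∀ b, W.qf t b = 0) : t = 0 := by
  have h₁ : (W.eY.symm t).1 = 0 := ((W.eY.symm.toAddMonoidHom.isOfFinAddOrder ht).fst).eq_zero'
  have h₂ : (W.eY.symm t).2 = 0 := funext fun j => by
    rw [← W.qf_y_eq_eY_symm_snd, W.qf_symm, hq, Pi.zero_apply]
  exact W.eY.symm.map_eq_zero_iff.1 (Prod.ext h₁ h₂)

noncomputable def rho : X →+ AddCommGroup.torsion Y :=
  (W.bX.constr ℤ fun i => (⟨W.z i, W.z_mem_torsion i⟩ : AddCommGroup.torsion Y)).toAddMonoidHom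

theorem qf_rho (x : X) (b : Y) : W.qf (W.rho x) b = (W.lam x b : ZMod 2) := by
  let F : X →ₗ[ℤ] ZMod 2 :=
    ((W.qf.flip b).comp ((AddCommGroup.torsion Y).subtype.comp W.rho)).toIntLinearMap
  let F' : X →ₗ[ℤ] ZMod 2 := ((Int.castAddHom (ZMod 2)).comp (W.lam.flip b)).toIntLinearMap
  refine LinearMap.congr_fun (W.bX.ext (f₁ := F) (f₂ := F') fun i => ?_) x
  simpa [F, F', rho] using W.qf_z_eq_lam i b

end WallPairing

/-- There exists a unique group homomorphism `ρ : X → Torsion(Y)` such that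
`q(ρ(x), y)` equals the mod-2 reduction of `λ(x, y)` for all x, y. -/
theorem wallPairing_exists_unique_rho {g : ℕ} {X Y A : Type} [AddCommGroup X]
    [AddCommGroup Y] [AddCommGroup A] (W : WallPairing g X Y A) :
    ∃! ρ : X →+ AddCommGroup.torsion Y,
      ∀ (x : X) (y : Y), W.qf (ρ x : Y) y = ((W.lam x y : ℤ) : ZMod 2) := by
  refine ⟨W.rho, W.qf_rho, fun ρ hρ => AddMonoidHom.ext fun x => ?_⟩
  rw [← sub_eq_zero, ← Subtype.coe_inj, AddSubgroup.coe_sub, AddSubgroup.coe_zero]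
  refine W.eq_zero_of_mem_torsion_of_qf_eq_zero (sub_mem (ρ x).2 (W.rho x).2) fun b => ?_
  rw [map_sub, AddMonoidHom.sub_apply, hρ, W.qf_rho, sub_self]
end

section
/- Let X be a set and let F ⊆ 𝒪(X) be a sub-poset satisfying the chain condition. Let v = (v_1, …, v_k) ∈ F. Then the poset F_{>v} = {w ∈ F : v < w} is order-isomorphic to the poset Z^k(F_v), via the map which replaces each occurrence of v_i in a sequence by the formal symbol z_i. -/
/-!
Replacing each `v_i` by `z_i` is an injection `X ↪ X ⊕ Fin k`, and mapping sequences along an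
injection is an order embedding `𝒪(X) ↪o 𝒪(X ⊔ Z)`; it remains to see that it maps `F_{>v}` onto
`Z^k(F_v)`. If `v < w ∈ F`, the image of `w` contains `(z_1, …, z_k)`, and its `X`-part `t` is `w`
with the `v_i` deleted, so `t · v` is a permutation of `w`: it lies in `F` by permutation closure,
and `t` is nonempty because `v ≠ w`. Conversely, substituting `v_i` for `z_i` in `u ∈ Z^k(F_v)`
gives a permutation of `t · v`, where `t` is the `X`-part of `u`, and this substitution inverts the
replacement because `t` and `v` are disjoint.
-/

/-- `𝒪(X)`: the poset of nonempty finite sequences of distinct elements of `X`,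
ordered by "is an ordered subsequence of". -/
def OSeq (X : Type) : Type := {l : List X // l ≠ [] ∧ l.Nodup}

instance (X : Type) : PartialOrder (OSeq X) where
  le a b := a.val.Sublist b.val
  le_refl a := List.Sublist.refl _
  le_trans a b c hab hbc := List.Sublist.trans hab hbc
  le_antisymm a b hab hba := Subtype.ext (List.Sublist.antisymm hab hba)

/-- A sub-poset `F ⊆ 𝒪(X)` satisfies the chain condition if it is closed under passing to
(ordered) subsequences and under permutations. -/
def ChainCond {X : Type} (F : Set (OSeq X)) : Prop :=
  (∀ v ∈ F, ∀ u : OSeq X, u ≤ v → u ∈ F) ∧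
  (∀ v ∈ F, ∀ u : OSeq X, u.val.Perm v.val → u ∈ F)

/-- `F_v`: the poset of sequences `w` such that the concatenation `w · v` consists of
distinct elements and lies in `F`. -/
def seqRes {X : Type} (F : Set (OSeq X)) (v : OSeq X) : Set (OSeq X) :=
  {w | ∃ h : (w.val ++ v.val ≠ [] ∧ (w.val ++ v.val).Nodup),
    (⟨w.val ++ v.val, h⟩ : OSeq X) ∈ F}

/-- The sequence `(z_1, …, z_n)` of formal symbols, as elements of `X ⊕ Fin n`. -/
def zList (X : Type) (n : ℕ) : List (X ⊕ Fin n) := (List.finRange n).map Sum.inr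

/-- `Z^n F`: sequences `w` in `𝒪(X ⊔ {z_1,…,z_n})` with `(z_1,…,z_n) ≤ w` whose
subsequence complementary to the `z_i` lies in `F`. -/
def ZSet {X : Type} (n : ℕ) (F : Set (OSeq X)) : Set (OSeq (X ⊕ Fin n)) :=
  {w | (zList X n).Sublist w.val ∧
    ∃ h : (w.val.filterMap Sum.getLeft? ≠ [] ∧ (w.val.filterMap Sum.getLeft?).Nodup),
      (⟨w.val.filterMap Sum.getLeft?, h⟩ : OSeq X) ∈ F}

open scoped List

theorem List.perm_filter_append_of_sublist {α : Type*} {s u : List α} {p : α → Bool}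
    (hsu : s <+ u) (hu : u.Nodup) (hp : ∀ x ∈ u, p x = false ↔ x ∈ s) : u.filter p ++ s ~ u := by
  refine .trans (.append_left _ ?_) (u.filter_append_perm p)
  rw [List.perm_ext_iff_of_nodup (hsu.nodup hu) (hu.filter _)]
  intro x
  simp only [List.mem_filter, Bool.not_eq_true']
  exact ⟨fun hx => ⟨hsu.subset hx, (hp x (hsu.subset hx)).mpr hx⟩,
    fun ⟨hx, hpx⟩ => (hp x hx).mp hpx⟩

namespace OSeq

variable {X Y : Type}

theorem lt_iff_sublist_and_length_lt {v w : OSeq X} :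
    v < w ↔ v.val <+ w.val ∧ v.val.length < w.val.length := by
  refine ⟨fun h => ⟨h.le, lt_of_le_of_ne h.le.length_le fun hlen => h.ne ?_⟩,
    fun ⟨hvw, hlen⟩ => lt_of_le_of_ne hvw fun h => hlen.ne (by rw [h])⟩
  exact Subtype.ext (h.le.eq_of_length hlen)

theorem exists_mem_of_perm {F : Set (OSeq X)} (hF : ChainCond F) {w : OSeq X} (hw : w ∈ F)
    {l : List X} (hl : l ~ w.val) : ∃ h : l ≠ [] ∧ l.Nodup, (⟨l, h⟩ : OSeq X) ∈ F :=
  have h : l ≠ [] ∧ l.Nodup :=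
    ⟨fun hnil => w.prop.1 (by simpa [hnil] using hl), hl.nodup_iff.mpr w.prop.2⟩
  ⟨h, hF.2 w hw ⟨l, h⟩ hl⟩

def map (f : X ↪ Y) (w : OSeq X) : OSeq Y :=
  ⟨w.val.map f, by simpa using w.prop.1, w.prop.2.map f.injective⟩

theorem val_map (f : X ↪ Y) (w : OSeq X) : (map f w).val = w.val.map f :=
  rfl

def mapEmbedding (f : X ↪ Y) : OSeq X ↪o OSeq Y :=
  OrderEmbedding.ofMapLEIff (map f) fun a b => by
    refine ⟨fun h => ?_, List.Sublist.map f⟩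
    obtain ⟨l, hl, hal⟩ := List.sublist_map_iff.mp (show a.val.map f <+ b.val.map f from h)
    change a.val <+ b.val
    rwa [List.map_injective_iff.mpr f.injective hal]

end OSeq

section ReplaceZ

variable {X : Type}

def substZ (v : List X) : X ⊕ Fin v.length → X :=
  Sum.elim id v.get

theorem map_substZ_zList (v : List X) : (zList X v.length).map (substZ v) = v := by
  rw [zList, List.map_map]
  exact List.map_get_finRange v

theorem map_substZ_filter_isLeft (v : List X) (u : List (X ⊕ Fin v.length)) :
    (u.filter Sum.isLeft).map (substZ v) = u.filterMap Sum.getLeft? := by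
  induction u with
  | nil => rfl
  | cons a u ih => cases a <;> simp_all [substZ, List.filter_cons, List.filterMap_cons]

theorem perm_filter_isLeft_append_zList {n : ℕ} {u : List (X ⊕ Fin n)} (hz : zList X n <+ u)
    (hu : u.Nodup) : u.filter Sum.isLeft ++ zList X n ~ u :=
  List.perm_filter_append_of_sublist hz hu fun a _ => by cases a <;> simp [zList]

variable [DecidableEq X]

def replaceZ (v : List X) (x : X) : X ⊕ Fin v.length :=
  if h : x ∈ v then Sum.inr ⟨v.idxOf x, List.idxOf_lt_length_iff.mpr h⟩ else Sum.inl x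

theorem substZ_replaceZ (v : List X) (x : X) : substZ v (replaceZ v x) = x := by
  unfold replaceZ
  split
  · exact List.idxOf_get _
  · rfl

def replaceZEmbedding (v : List X) : X ↪ X ⊕ Fin v.length :=
  ⟨replaceZ v, Function.LeftInverse.injective (substZ_replaceZ v)⟩

theorem replaceZ_getElem {v : List X} (hv : v.Nodup) (i : ℕ) (h : i < v.length) :
    replaceZ v v[i] = Sum.inr ⟨i, h⟩ := by
  simp only [replaceZ, dif_pos (List.getElem_mem h), hv.idxOf_getElem]

theorem map_replaceZ_self {v : List X} (hv : v.Nodup) : v.map (replaceZ v) = zList X v.length := by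
  refine List.ext_getElem (by simp [zList]) fun i h _ => ?_
  simp [zList, replaceZ_getElem hv i (by simpa using h)]

theorem replaceZ_substZ {v : List X} (hv : v.Nodup) :
    ∀ {a : X ⊕ Fin v.length}, (∀ x, a = .inl x → x ∉ v) → replaceZ v (substZ v a) = a
  | .inl x, h => dif_neg (h x rfl)
  | .inr i, _ => replaceZ_getElem hv i.1 i.2

theorem filterMap_getLeft?_map_replaceZ (v w : List X) :
    (w.map (replaceZ v)).filterMap Sum.getLeft? = w.filter (· ∉ v) := by
  induction w with
  | nil => rfl
  | cons a w ih => by_cases h : a ∈ v <;> simp [replaceZ, h, ih, List.filterMap_cons]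

end ReplaceZ

section Restriction

variable {X : Type} [DecidableEq X] {F : Set (OSeq X)}

theorem map_replaceZ_mem_ZSet (hF : ChainCond F) {v w : OSeq X} (hw : w ∈ F) (hvw : v < w) :
    OSeq.map (replaceZEmbedding v.val) w ∈ ZSet v.val.length (seqRes F v) := by
  obtain ⟨hsub, hlen⟩ := OSeq.lt_iff_sublist_and_length_lt.mp hvw
  have hperm : w.val.filter (· ∉ v.val) ++ v.val ~ w.val :=
    List.perm_filter_append_of_sublist hsub w.prop.2 fun x _ => by simp
  have hne : w.val.filter (· ∉ v.val) ≠ [] := by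
    intro h
    have := hperm.length_eq
    simp only [h, List.nil_append] at this
    omega
  obtain ⟨hnd, hmem⟩ := OSeq.exists_mem_of_perm hF hw hperm
  refine ⟨?_, ?_⟩
  · rw [← map_replaceZ_self v.prop.2]
    exact hsub.map _
  · rw [OSeq.val_map, replaceZEmbedding, Function.Embedding.coeFn_mk,
      filterMap_getLeft?_map_replaceZ]
    exact ⟨⟨hne, (List.nodup_append.mp hnd.2).1⟩, hnd, hmem⟩

theorem exists_map_replaceZ_eq (hF : ChainCond F) {v : OSeq X}
    {u : OSeq (X ⊕ Fin v.val.length)} (hu : u ∈ ZSet v.val.length (seqRes F v)) :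
    ∃ w ∈ F, v < w ∧ OSeq.map (replaceZEmbedding v.val) w = u := by
  obtain ⟨hz, ⟨hne, _⟩, ⟨_, hnd⟩, hmem⟩ := hu
  have hperm : u.val.map (substZ v.val) ~ u.val.filterMap Sum.getLeft? ++ v.val := by
    have := (perm_filter_isLeft_append_zList hz u.prop.2).map (substZ v.val)
    rw [List.map_append, map_substZ_filter_isLeft, map_substZ_zList] at this
    exact this.symm
  obtain ⟨hw, hwF⟩ := OSeq.exists_mem_of_perm hF hmem hperm
  refine ⟨⟨_, hw⟩, hwF, OSeq.lt_iff_sublist_and_length_lt.mpr ⟨?_, ?_⟩, ?_⟩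
  · simpa only [map_substZ_zList] using hz.map (substZ v.val)
  · rw [hperm.length_eq, List.length_append]
    have := List.length_pos_iff.mpr hne
    omega
  · refine Subtype.ext <| (List.map_map ..).trans <|
      (List.map_congr_left fun a ha => ?_).trans (List.map_id _)
    refine replaceZ_substZ v.prop.2 ?_
    rintro x rfl hxv
    exact List.disjoint_of_nodup_append hnd (List.mem_filterMap.mpr ⟨_, ha, rfl⟩) hxv

end Restriction

theorem seqRes_gt_orderIso_ZSet_general {X : Type} [DecidableEq X] (F : Set (OSeq X))
    (hF : ChainCond F) (v : OSeq X) :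
    ∃ e : {w : OSeq X // w ∈ F ∧ v < w} ≃o
        {w : OSeq (X ⊕ Fin v.val.length) // w ∈ ZSet v.val.length (seqRes F v)},
      ∀ w : {w : OSeq X // w ∈ F ∧ v < w},
        ((e w).val.val : List (X ⊕ Fin v.val.length)) =
          w.val.val.map (fun x =>
            if h : x ∈ v.val then
              Sum.inr (⟨v.val.idxOf x, List.idxOf_lt_length_iff.mpr h⟩ : Fin v.val.length)
            else Sum.inl x) := by
  let e : {w : OSeq X // w ∈ F ∧ v < w} ↪o OSeq (X ⊕ Fin v.val.length) :=
    (OrderEmbedding.subtype fun w => w ∈ F ∧ v < w).trans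
      (OSeq.mapEmbedding (replaceZEmbedding v.val))
  have hrange : Set.range e = ZSet v.val.length (seqRes F v) := by
    ext u
    constructor
    · rintro ⟨w, rfl⟩
      exact map_replaceZ_mem_ZSet hF w.prop.1 w.prop.2
    · intro hu
      obtain ⟨w, hwF, hvw, rfl⟩ := exists_map_replaceZ_eq hF hu
      exact ⟨⟨w, hwF, hvw⟩, rfl⟩
  exact ⟨(OrderEmbedding.orderIso (f := e)).trans (OrderIso.setCongr _ _ hrange), fun w => rfl⟩

/-- For a sub-poset `F ⊆ 𝒪(X)` satisfying the chain condition and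
`v = (v_1,…,v_k) ∈ F`, the poset `F_{>v} = {w ∈ F : v < w}` is order-isomorphic to
`Z^k(F_v)`, via the map replacing each occurrence of `v_i` by the formal symbol `z_i`. -/
theorem seqRes_gt_orderIso_ZSet {X : Type} [DecidableEq X] (F : Set (OSeq X))
    (hF : ChainCond F) (v : OSeq X) (hv : v ∈ F) :
    ∃ e : {w : OSeq X // w ∈ F ∧ v < w} ≃o
        {w : OSeq (X ⊕ Fin v.val.length) // w ∈ ZSet v.val.length (seqRes F v)},
      ∀ w : {w : OSeq X // w ∈ F ∧ v < w},
        ((e w).val.val : List (X ⊕ Fin v.val.length)) =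
          w.val.val.map (fun x =>
            if h : x ∈ v.val then
              Sum.inr (⟨v.val.idxOf x, List.idxOf_lt_length_iff.mpr h⟩ : Fin v.val.length)
            else Sum.inl x) :=
  seqRes_gt_orderIso_ZSet_general F hF v
end

section
/- Let (X, Y, λ, q, α) be a Wall pairing, and let F_0 ⊆ M(X,Y) be the sub-poset of sequences ((x_1,y_1),…,(x_k,y_k)) ∈ M(X,Y) such that y_j ≠ 0 for at least one j. Define h : F_0 → L(X,Y) by sending a sequence to its subsequence of pairs (x_l, y_l) with y_l ≠ 0. Then h is a well-defined order-preserving map, h ∘ j = id on L(X,Y) where j : L(X,Y) → F_0 is the inclusion, and j(h(z)) ≤ z for every z ∈ F_0. -/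
section
variable {g : ℕ} {X Y A : Type} [AddCommGroup X] [AddCommGroup Y] [AddCommGroup A]

/-- Membership in the poset `L(X,Y)`: a nonempty list of distinct pairs
`((x_1,y_1),…,(x_k,y_k))` with `λ(x_i,y_j) = δ_{ij}`, `q(y_i,y_j) = 0` and `α(y_i) = 0`.
The partial order on such lists is the (ordered) sublist relation. -/
def LMem (W : WallPairing g X Y A) (l : List (X × Y)) : Prop :=
  l ≠ [] ∧ l.Nodup ∧
  (∀ i j : Fin l.length, W.lam (l.get i).1 (l.get j).2 = if i = j then 1 else 0) ∧
  (∀ i j : Fin l.length, W.qf (l.get i).2 (l.get j).2 = 0) ∧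
  (∀ i : Fin l.length, W.alpha (l.get i).2 = 0)

/-- Membership in the poset `M(X,Y)`: a nonempty list of distinct pairs such that the
`x_i` form a unimodular sequence in `X`, `α(y_i) = 0`, each `y_i` is either `0` or dual to
the `x_j`'s, and `q(y_i,y_j) = 0`. -/
def MMem (W : WallPairing g X Y A) (l : List (X × Y)) : Prop :=
  l ≠ [] ∧ l.Nodup ∧
  LinearIndependent ℤ (fun i : Fin l.length => (l.get i).1) ∧
  (∃ C : Submodule ℤ X,
    IsCompl (Submodule.span ℤ (Set.range fun i : Fin l.length => (l.get i).1)) C) ∧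
  (∀ i : Fin l.length, W.alpha (l.get i).2 = 0) ∧
  (∀ i : Fin l.length, (l.get i).2 = 0 ∨
    ∀ j : Fin l.length, W.lam (l.get j).1 (l.get i).2 = if j = i then 1 else 0) ∧
  (∀ i j : Fin l.length, W.qf (l.get i).2 (l.get j).2 = 0)

/-- Membership in the sub-poset `F_0 ⊆ M(X,Y)` of sequences with at least one `y_j ≠ 0`. -/
def F0Mem (W : WallPairing g X Y A) (l : List (X × Y)) : Prop :=
  MMem W l ∧ ∃ i : Fin l.length, (l.get i).2 ≠ 0

/-- The map `h` sending a sequence to its subsequence of pairs `(x_l, y_l)` with `y_l ≠ 0`. -/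
def hmap [DecidableEq Y] (l : List (X × Y)) : List (X × Y) :=
  l.filter fun p => decide (p.2 ≠ 0)

/-!
Every condition defining `L(X,Y)` is a condition on pairs of members of the sequence, so it
passes to subsequences; the only one that fails in `M(X,Y)` is duality `λ(x_i, y_j) = δ_{ij}`,
which `M(X,Y)` imposes exactly on the `y_j ≠ 0`, i.e. on the members kept by `h`. Conversely
`λ(x_i, y_i) = 1` forces `y_i ≠ 0` in `L(X,Y)`, so `h` fixes `L(X,Y)`.
-/

theorem List.Nodup.forall_get_ite_iff {α M : Type*} [DecidableEq α] [Zero M] [One M]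
    {l : List α} (hl : l.Nodup) {F : α → α → M} :
    (∀ i j : Fin l.length, F (l.get i) (l.get j) = if i = j then 1 else 0) ↔
      ∀ a ∈ l, ∀ b ∈ l, F a b = if a = b then 1 else 0 := by
  simp only [List.forall_mem_iff_get, hl.get_inj_iff]

section WallPairing

variable (W : WallPairing g X Y A)

open Classical in
theorem lMem_iff_forall_mem {l : List (X × Y)} :
    LMem W l ↔ l ≠ [] ∧ l.Nodup ∧
      (∀ p ∈ l, ∀ q ∈ l, W.lam p.1 q.2 = if p = q then 1 else 0) ∧
      (∀ p ∈ l, ∀ q ∈ l, W.qf p.2 q.2 = 0) ∧ ∀ p ∈ l, W.alpha p.2 = 0 := by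
  unfold LMem
  refine and_congr_right fun _ => and_congr_right fun hl => ?_
  simp only [hl.forall_get_ite_iff (F := fun p q => W.lam p.1 q.2), List.forall_mem_iff_get]

variable {W}

theorem LMem.snd_ne_zero {l : List (X × Y)} (hl : LMem W l) {p : X × Y} (hp : p ∈ l) :
    p.2 ≠ 0 := by
  classical
  intro h0
  have hdual := ((lMem_iff_forall_mem W).mp hl).2.2.1 p hp p hp
  rw [if_pos rfl, h0, map_zero] at hdual
  exact zero_ne_one hdual

open Classical in
theorem MMem.lam_eq_ite {l : List (X × Y)} (hl : MMem W l) {p q : X × Y} (hp : p ∈ l)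
    (hq : q ∈ l) (hq0 : q.2 ≠ 0) : W.lam p.1 q.2 = if p = q then 1 else 0 := by
  obtain ⟨-, hnd, -, -, -, hdual, -⟩ := hl
  obtain ⟨i, rfl⟩ := List.mem_iff_get.mp hp
  obtain ⟨j, rfl⟩ := List.mem_iff_get.mp hq
  rw [(hdual j).resolve_left hq0 i]
  simp only [hnd.get_inj_iff]

variable [DecidableEq Y]

theorem LMem.hmap_eq {l : List (X × Y)} (hl : LMem W l) : hmap l = l :=
  List.filter_eq_self.mpr fun _ hp => by simpa using hl.snd_ne_zero hp

theorem F0Mem.lMem_hmap {l : List (X × Y)} (hl : F0Mem W l) : LMem W (hmap l) := by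
  classical
  obtain ⟨hM, i, hi⟩ := hl
  obtain ⟨-, hnd, -, -, halpha, -, hqf⟩ := id hM
  replace halpha : ∀ p ∈ l, W.alpha p.2 = 0 := List.forall_mem_iff_get.mpr halpha
  replace hqf : ∀ p ∈ l, ∀ q ∈ l, W.qf p.2 q.2 = 0 :=
    List.forall_mem_iff_get.mpr fun i => List.forall_mem_iff_get.mpr (hqf i)
  have hsub : hmap l ⊆ l := List.filter_sublist.subset
  have hkept : ∀ q ∈ hmap l, q.2 ≠ 0 := fun q hq => by simpa using (List.mem_filter.mp hq).2
  refine (lMem_iff_forall_mem W).mpr ⟨?_, hnd.filter _, ?_, ?_, ?_⟩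
  · exact List.ne_nil_of_mem (List.mem_filter.mpr ⟨l.get_mem i, by simpa using hi⟩)
  · exact fun p hp q hq => hM.lam_eq_ite (hsub hp) (hsub hq) (hkept q hq)
  · exact fun p hp q hq => hqf p (hsub hp) q (hsub hq)
  · exact fun p hp => halpha p (hsub hp)

end WallPairing

/-- `h : F_0 → L(X,Y)` is a well-defined order-preserving map (with respect to
the sublist order), `h ∘ j = id` on `L(X,Y)` for the inclusion `j : L(X,Y) → F_0`, and
`j(h(z)) ≤ z` for every `z ∈ F_0`. -/
theorem F0_retracts_onto_L [DecidableEq Y] (W : WallPairing g X Y A) :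
    (∀ l : List (X × Y), F0Mem W l → LMem W (hmap l)) ∧
    (∀ l l' : List (X × Y), F0Mem W l → F0Mem W l' → l.Sublist l' →
      (hmap l).Sublist (hmap l')) ∧
    (∀ l : List (X × Y), LMem W l → hmap l = l) ∧
    (∀ l : List (X × Y), F0Mem W l → (hmap l).Sublist l) :=
  ⟨fun _ hl => hl.lMem_hmap, fun _ _ _ _ h => h.filter _, fun _ hl => hl.hmap_eq,
    fun _ _ => List.filter_sublist⟩

end
end

section
/- Let (X, Y, λ, q, α) be a Wall pairing of rank g and let v = ((v_1,0),…,(v_i,0)) where (v_1,…,v_i) extends to a configuration ((v_1,w_1),…,(v_i,w_i)) with λ(v_l,w_m)=δ_{lm}, q(w_l,w_m)=0, α(w_l)=0. Set V = span(v_1,…,v_i), W = span(w_1,…,w_i), W^⊥ = {x ∈ X : λ(x,w)=0 ∀w ∈ W}, V^⊥ = {y ∈ Y : λ(v,y)=0 ∀v ∈ V}, Ŵ = {y ∈ Y : q(y,w)=0 ∀w ∈ W}. Then there is an order-isomorphism of posets L(X,Y) ∩ M(X,Y)_v ≅ L(W^⊥, V^⊥ ∩ Ŵ)⟨V × ρ(V)⟩,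 given by writing each x_j = a_j + b_j with a_j ∈ W^⊥, b_j ∈ V, and each y_j = c_j + e_j with c_j ∈ V^⊥ ∩ Ŵ, e_j ∈ ρ(V), and sending ((x_1,y_1),…,(x_k,y_k)) to (((a_1,c_1),(b_1,e_1)),…,((a_k,c_k),(b_k,e_k))). -/
/-- The subgroup of `X` of elements `x` with `λ(x, w) = 0` for all `w ∈ S` (denoted `S^⊥`). -/
def lamPerpX {X Y : Type} [AddCommGroup X] [AddCommGroup Y] (lam : X →+ Y →+ ℤ)
    (S : AddSubgroup Y) : AddSubgroup X where
  carrier := {x : X | ∀ w ∈ S, lam x w = 0}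
  zero_mem' := by intro w hw; simp
  add_mem' := by intro a b ha hb w hw; simp [ha w hw, hb w hw]
  neg_mem' := by intro a ha w hw; simp [ha w hw]

/-- The subgroup of `Y` of elements `y` with `λ(v, y) = 0` for all `v ∈ S` (denoted `S^⊥`). -/
def lamPerpY {X Y : Type} [AddCommGroup X] [AddCommGroup Y] (lam : X →+ Y →+ ℤ)
    (S : AddSubgroup X) : AddSubgroup Y where
  carrier := {y : Y | ∀ v ∈ S, lam v y = 0}
  zero_mem' := by intro v hv; simp
  add_mem' := by intro a b ha hb v hv; simp [ha v hv, hb v hv]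
  neg_mem' := by intro a ha v hv; simp [ha v hv]

/-- The subgroup of `Y` of elements `y` with `q(y, w) = 0` for all `w ∈ S` (denoted `Ŝ`). -/
def qPerp {Y : Type} [AddCommGroup Y] (q : Y →+ Y →+ ZMod 2) (S : AddSubgroup Y) :
    AddSubgroup Y where
  carrier := {y : Y | ∀ w ∈ S, q y w = 0}
  zero_mem' := by intro w hw; simp
  add_mem' := by intro a b ha hb w hw; simp [ha w hw, hb w hw]
  neg_mem' := by intro a ha w hw; simp [ha w hw]

/-- Lists with a property, partially ordered by the (ordered) sublist relation.  Taking the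
property to be membership in a set of nonempty duplicate-free sequences, this realizes the
sub-posets of `𝒪(-)` considered in the paper. -/
def ListPoset {T : Type} (P : List T → Prop) : Type := {l : List T // P l}

instance {T : Type} (P : List T → Prop) : PartialOrder (ListPoset P) where
  le a b := a.val.Sublist b.val
  le_refl a := List.Sublist.refl _
  le_trans a b c hab hbc := List.Sublist.trans hab hbc
  le_antisymm a b hab hba := Subtype.ext (List.Sublist.antisymm hab hba)

section
variable {g : ℕ} {X Y A : Type} [AddCommGroup X] [AddCommGroup Y] [AddCommGroup A]

/-- Membership in `L(W^⊥, V^⊥ ∩ Ŵ)⟨V × ρ(V)⟩`: a nonempty duplicate-free list of entries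
`((a,c),(b,e))` whose first components `(a,c)` form an element of `L(W^⊥, V^⊥ ∩ Ŵ)`
(with respect to the restricted structure maps, i.e. the global ones) and whose second
components are labels `(b,e) ∈ V × ρ(V)`.  Here `SX = W^⊥`, `SY = V^⊥ ∩ Ŵ`, `SV = V`,
`SR = ρ(V)`. -/
def LBracketMem (W : WallPairing g X Y A) (SX : AddSubgroup X) (SY : AddSubgroup Y)
    (SV : AddSubgroup X) (SR : AddSubgroup Y) (l : List ((X × Y) × (X × Y))) : Prop :=
  l ≠ [] ∧ l.Nodup ∧ (l.map Prod.fst).Nodup ∧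
  (∀ j : Fin l.length, (l.get j).1.1 ∈ SX ∧ (l.get j).1.2 ∈ SY ∧
    (l.get j).2.1 ∈ SV ∧ (l.get j).2.2 ∈ SR) ∧
  (∀ j k : Fin l.length, W.lam (l.get j).1.1 (l.get k).1.2 = if j = k then 1 else 0) ∧
  (∀ j k : Fin l.length, W.qf (l.get j).1.2 (l.get k).1.2 = 0) ∧
  (∀ j : Fin l.length, W.alpha (l.get j).1.2 = 0)


/-!
Put `P = projV × projT` on `X × Y`, where `projV x = ∑ λ(x, w_m) v_m` and
`projT y = ∑ q(y, w_m) ρ(v_m)`. As `λ(v_l, w_m) = δ_lm` and `q(ρ x, y) = λ(x, y) mod 2`, `P` fixes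
`V × ρ(V)` and kills `W^⊥ × Ŵ`, so `p ↦ (p - P p, P p)` and `((a, c), (b, e)) ↦ (a + b, c + e)`
are inverse bijections between entries `(x, y)` with `y ∈ V^⊥` and entries of
`(W^⊥ × (V^⊥ ∩ Ŵ)) × (V × ρ(V))`. Torsion of `Y` is invisible to `λ`, `q` and `α`, `V` is
`λ`-orthogonal to `V^⊥`, and `q(ρ(V), V^⊥) = 0`, so `(a + b, c + e)` has the same pairings and
`α`-values as `(a, c)`: the conditions defining `L` correspond entrywise.

For `((x_j, y_j))_j ∈ L(X,Y)`, appending `v` lands in `M(X,Y)` exactly when every `y_j` is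
`λ`-orthogonal to `V`: necessity is read off the condition on the `y`'s in `M`, and conversely
`(y_j)_j, (w_m - ∑_j λ(x_j, w_m) y_j)_m` is a `λ`-dual family to `(x_j)_j, (v_m)_m`, which makes
the latter unimodular.
-/

section Lists
variable {α β : Type*}

def KroneckerOn (F : α → α → ℤ) (l : List α) : Prop :=
  (∀ a ∈ l, F a a = 1) ∧ ∀ a ∈ l, ∀ b ∈ l, a ≠ b → F a b = 0

theorem get_delta_iff_nodup_kroneckerOn {F : α → α → ℤ} {l : List α} :
    (∀ i j : Fin l.length, F (l.get i) (l.get j) = if i = j then 1 else 0) ↔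
      l.Nodup ∧ KroneckerOn F l := by
  constructor
  · intro h
    have hnd : l.Nodup := List.nodup_iff_injective_get.2 fun i j hij => by
      by_contra hne
      have hij' := h i j
      rw [if_neg hne, hij, h j j, if_pos rfl] at hij'
      exact one_ne_zero hij'
    refine ⟨hnd, fun a ha => ?_, fun a ha b hb hab => ?_⟩
    · obtain ⟨i, rfl⟩ := List.mem_iff_get.1 ha
      simpa using h i i
    · obtain ⟨i, rfl⟩ := List.mem_iff_get.1 ha
      obtain ⟨j, rfl⟩ := List.mem_iff_get.1 hb
      simpa [show i ≠ j by rintro rfl; exact hab rfl] using h i j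
  · rintro ⟨hnd, hdiag, hoff⟩ i j
    split_ifs with hij
    · subst hij
      exact hdiag _ (List.get_mem _ _)
    · exact hoff _ (List.get_mem _ _) _ (List.get_mem _ _) (mt hnd.get_inj_iff.1 hij)

theorem forall_get_get_iff {R : α → α → Prop} {l : List α} :
    (∀ i j : Fin l.length, R (l.get i) (l.get j)) ↔ ∀ a ∈ l, ∀ b ∈ l, R a b := by
  simp only [List.forall_mem_iff_get]

theorem get_delta_map_iff {F : α → α → ℤ} (f : β → α) {l : List β} :
    (∀ i j : Fin (l.map f).length, F ((l.map f).get i) ((l.map f).get j) =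
        if i = j then 1 else 0) ↔
      ∀ i j : Fin l.length, F (f (l.get i)) (f (l.get j)) = if i = j then 1 else 0 := by
  have hlen : (l.map f).length = l.length := List.length_map f
  constructor
  · intro h i j
    simpa using h (i.cast hlen.symm) (j.cast hlen.symm)
  · intro h i j
    simpa using h (i.cast hlen) (j.cast hlen)

theorem get_column_delta_of_nodup {M : α → Prop} {F : α → α → ℤ} {l : List α} (hl : l.Nodup)
    (h : ∀ b ∈ l, M b ∨ F b b = 1 ∧ ∀ a ∈ l, a ≠ b → F a b = 0) (i : Fin l.length) :
    M (l.get i) ∨ ∀ j : Fin l.length, F (l.get j) (l.get i) = if j = i then 1 else 0 := by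
  refine (h _ (List.get_mem _ _)).imp_right fun ⟨hdiag, hoff⟩ j => ?_
  split_ifs with hji
  · rwa [hji]
  · exact hoff _ (List.get_mem _ _) (mt hl.get_inj_iff.1 hji)

end Lists

def ListPoset.mapOrderIso {S T : Type} {P : List S → Prop} {Q : List T → Prop} (f : S → T)
    (g : T → S) (hf : ∀ l, P l → Q (l.map f)) (hg : ∀ l, Q l → P (l.map g))
    (hgf : ∀ l, P l → (l.map f).map g = l) (hfg : ∀ l, Q l → (l.map g).map f = l) :
    ListPoset P ≃o ListPoset Q where
  toFun u := ⟨u.1.map f, hf _ u.2⟩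
  invFun u := ⟨u.1.map g, hg _ u.2⟩
  left_inv u := Subtype.ext (hgf _ u.2)
  right_inv u := Subtype.ext (hfg _ u.2)
  map_rel_iff' {a b} := by
    refine ⟨fun h => ?_, fun h => List.Sublist.map f h⟩
    have h' := List.Sublist.map g (show (a.1.map f).Sublist (b.1.map f) from h)
    rwa [hgf _ a.2, hgf _ b.2] at h'

theorem zmod_two_eq_zero_or_one (c : ZMod 2) : c = 0 ∨ c = 1 := by
  revert c
  decide

theorem mem_lamPerpX_closure_iff {lam : X →+ Y →+ ℤ} {S : Set Y} {x : X} :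
    x ∈ lamPerpX lam (AddSubgroup.closure S) ↔ ∀ s ∈ S, lam x s = 0 :=
  ⟨fun h s hs => h s (AddSubgroup.subset_closure hs),
    fun h _ hw => (AddSubgroup.closure_le (lam x).ker).2 h hw⟩

theorem mem_lamPerpY_closure_iff {lam : X →+ Y →+ ℤ} {S : Set X} {y : Y} :
    y ∈ lamPerpY lam (AddSubgroup.closure S) ↔ ∀ s ∈ S, lam s y = 0 :=
  ⟨fun h s hs => h s (AddSubgroup.subset_closure hs),
    fun h _ hv => (AddSubgroup.closure_le (lam.flip y).ker).2 h hv⟩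

theorem mem_qPerp_closure_iff {q : Y →+ Y →+ ZMod 2} {S : Set Y} {y : Y} :
    y ∈ qPerp q (AddSubgroup.closure S) ↔ ∀ s ∈ S, q y s = 0 :=
  ⟨fun h s hs => h s (AddSubgroup.subset_closure hs),
    fun h _ hw => (AddSubgroup.closure_le (q y).ker).2 h hw⟩

theorem mem_torsion_of_mem_map_rho {ρ : X →+ AddCommGroup.torsion Y} {S : AddSubgroup X} {e : Y}
    (he : e ∈ S.map ((AddCommGroup.torsion Y).subtype.comp ρ)) : e ∈ AddCommGroup.torsion Y := by
  obtain ⟨u, -, rfl⟩ := he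
  exact (ρ u).2

section Unimodular
variable (lam : X →+ Y →+ ℤ)

theorem linearIndependent_and_isCompl_of_dual {ι : Type*} [Fintype ι] [DecidableEq ι]
    {u : ι → X} {d : ι → Y} (hud : ∀ s t, lam (u s) (d t) = if s = t then 1 else 0) :
    LinearIndependent ℤ u ∧ ∃ C : Submodule ℤ X, IsCompl (Submodule.span ℤ (Set.range u)) C := by
  have hcoeff : ∀ (r : ι → ℤ) t, lam (∑ s, r s • u s) (d t) = r t := fun r t => by
    simp [map_sum, hud]
  refine ⟨Fintype.linearIndependent_iff.2 fun r hr t => by simpa [hr] using (hcoeff r t).symm,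
    ⨅ t, LinearMap.ker (lam.flip (d t)).toIntLinearMap, ?_, ?_⟩
  · rw [Submodule.disjoint_def]
    intro x hx hx'
    obtain ⟨r, rfl⟩ := (Submodule.mem_span_range_iff_exists_fun ℤ).1 hx
    have hr : r = 0 := funext fun t => by
      have ht := LinearMap.mem_ker.1 ((Submodule.mem_iInf _).1 hx' t)
      rwa [AddMonoidHom.coe_toIntLinearMap, AddMonoidHom.flip_apply, hcoeff] at ht
    simp [hr]
  · rw [codisjoint_iff, eq_top_iff]
    intro x _
    refine Submodule.mem_sup.2 ⟨∑ t, lam x (d t) • u t, ?_, x - ∑ t, lam x (d t) • u t, ?_,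
      add_sub_cancel _ _⟩
    · exact Submodule.sum_mem _ fun t _ =>
        Submodule.smul_mem _ _ (Submodule.subset_span (Set.mem_range_self t))
    · refine (Submodule.mem_iInf _).2 fun t => LinearMap.mem_ker.2 ?_
      rw [AddMonoidHom.coe_toIntLinearMap, AddMonoidHom.flip_apply, map_sub,
        AddMonoidHom.sub_apply, hcoeff, sub_self]

theorem linearIndependent_and_isCompl_of_kroneckerOn {zs : List ((X × Y) × Y)} (hnd : zs.Nodup)
    (hK : KroneckerOn (fun z z' => lam z.1.1 z'.2) zs) {L : List (X × Y)}
    (hL : zs.map Prod.fst = L) :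
    LinearIndependent ℤ (fun i : Fin L.length => (L.get i).1) ∧
      ∃ C : Submodule ℤ X,
        IsCompl (Submodule.span ℤ (Set.range fun i : Fin L.length => (L.get i).1)) C := by
  subst hL
  have hδ := get_delta_iff_nodup_kroneckerOn.2 ⟨hnd, hK⟩
  have hlen : (zs.map Prod.fst).length = zs.length := List.length_map _
  refine linearIndependent_and_isCompl_of_dual lam (d := fun t => (zs.get (t.cast hlen)).2)
    fun s t => ?_
  simpa using hδ (s.cast hlen) (t.cast hlen)

end Unimodular

namespace WallPairing
variable (W : WallPairing g X Y A)

theorem alpha_zero : W.alpha 0 = 0 := by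
  simpa using W.alpha_add 0 0

theorem lam_eq_zero_of_mem_torsion (x : X) {t : Y} (ht : t ∈ AddCommGroup.torsion Y) :
    W.lam x t = 0 :=
  (isOfFinAddOrder_iff_eq_zero _).1 ((W.lam x).isOfFinAddOrder ht)

theorem exists_eq_eY_zero_of_mem_torsion {t : Y} (ht : t ∈ AddCommGroup.torsion Y) :
    ∃ z, t = W.eY (0, z) := by
  have hfst : (W.eY.symm t).1 = 0 :=
    (isOfFinAddOrder_iff_eq_zero _).1 ((AddMonoidHom.fst _ _).isOfFinAddOrder
      (W.eY.symm.toAddMonoidHom.isOfFinAddOrder ht))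
  exact ⟨(W.eY.symm t).2, by rw [← hfst, Prod.mk.eta, AddEquiv.apply_symm_apply]⟩

include W in
theorem two_zsmul_eq_zero_of_mem_torsion {t : Y} (ht : t ∈ AddCommGroup.torsion Y) :
    (2 : ℤ) • t = 0 := by
  obtain ⟨z, rfl⟩ := W.exists_eq_eY_zero_of_mem_torsion ht
  have hz : (2 : ℤ) • z = 0 := funext fun j => by
    rw [Pi.smul_apply, two_zsmul, CharTwo.add_self_eq_zero, Pi.zero_apply]
  rw [← map_zsmul, Prod.smul_mk, smul_zero, hz, Prod.mk_zero_zero, map_zero]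

theorem qf_eY_zero (z z' : Fin g → ZMod 2) : W.qf (W.eY (0, z)) (W.eY (0, z')) = 0 := by
  let τ : (Fin g → ZMod 2) →+ Y := W.eY.toAddMonoidHom.comp (AddMonoidHom.inr _ _)
  have hτ : (W.qf.comp τ).compl₂ τ = 0 := by
    refine AddMonoidHom.functions_ext _ _ _ fun i c => ?_
    refine AddMonoidHom.functions_ext _ _ _ fun j c' => ?_
    rcases zmod_two_eq_zero_or_one c with rfl | rfl <;>
      rcases zmod_two_eq_zero_or_one c' with rfl | rfl <;>
      simp [τ, W.q_zz, Prod.mk_zero_zero]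
  exact DFunLike.congr_fun (DFunLike.congr_fun hτ z) z'

theorem alpha_eY_zero (z : Fin g → ZMod 2) : W.alpha (W.eY (0, z)) = 0 := by
  -- `α` is additive on the torsion, where `q` vanishes.
  let ατ : (Fin g → ZMod 2) →+ A := AddMonoidHom.mk' (fun z => W.alpha (W.eY (0, z)))
    fun a b => by
      have h := W.alpha_add (W.eY (0, a)) (W.eY (0, b))
      rwa [W.qf_eY_zero, map_zero, add_zero, ← map_add, Prod.mk_add_mk, add_zero] at h
  have hατ : ατ = 0 := AddMonoidHom.functions_ext _ _ _ fun i c => by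
    rcases zmod_two_eq_zero_or_one c with rfl | rfl
    · simp [ατ, Prod.mk_zero_zero, W.alpha_zero]
    · simpa [ατ] using W.alpha_z i
  exact DFunLike.congr_fun hατ z

theorem qf_eq_zero_of_mem_torsion {t t' : Y} (ht : t ∈ AddCommGroup.torsion Y)
    (ht' : t' ∈ AddCommGroup.torsion Y) : W.qf t t' = 0 := by
  obtain ⟨z, rfl⟩ := W.exists_eq_eY_zero_of_mem_torsion ht
  obtain ⟨z', rfl⟩ := W.exists_eq_eY_zero_of_mem_torsion ht'
  exact W.qf_eY_zero z z'

theorem alpha_eq_zero_of_mem_torsion {t : Y} (ht : t ∈ AddCommGroup.torsion Y) :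
    W.alpha t = 0 := by
  obtain ⟨z, rfl⟩ := W.exists_eq_eY_zero_of_mem_torsion ht
  exact W.alpha_eY_zero z

def smulTorsion (t : AddCommGroup.torsion Y) : ZMod 2 →+ Y :=
  ZMod.lift 2 ⟨zmultiplesHom Y t, by simpa using W.two_zsmul_eq_zero_of_mem_torsion t.2⟩

theorem smulTorsion_intCast (t : AddCommGroup.torsion Y) (n : ℤ) :
    W.smulTorsion t n = n • (t : Y) :=
  ZMod.lift_coe _ _ n

theorem smulTorsion_one (t : AddCommGroup.torsion Y) : W.smulTorsion t 1 = t := by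
  simpa using W.smulTorsion_intCast t 1

theorem qf_smulTorsion (t : AddCommGroup.torsion Y) (c : ZMod 2) (y : Y) :
    W.qf (W.smulTorsion t c) y = c * W.qf t y := by
  obtain ⟨n, rfl⟩ := ZMod.intCast_surjective c
  rw [smulTorsion_intCast, map_zsmul, AddMonoidHom.smul_apply, zsmul_eq_mul]

section OrthogonalSplitting
variable (ρ : X →+ AddCommGroup.torsion Y) {S : AddSubgroup X}

theorem lam_add_add (x : X) {b : X} {y t : Y} (hb : b ∈ S) (hy : y ∈ lamPerpY W.lam S)
    (ht : t ∈ AddCommGroup.torsion Y) : W.lam (x + b) (y + t) = W.lam x y := by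
  simp only [map_add, AddMonoidHom.add_apply, hy b hb, W.lam_eq_zero_of_mem_torsion _ ht,
    add_zero]

theorem qf_eq_zero_of_mem_map_rho
    (hρ : ∀ (x : X) (y : Y), W.qf (ρ x : Y) y = ((W.lam x y : ℤ) : ZMod 2))
    {e y : Y} (he : e ∈ S.map ((AddCommGroup.torsion Y).subtype.comp ρ))
    (hy : y ∈ lamPerpY W.lam S) : W.qf e y = 0 := by
  obtain ⟨u, hu, rfl⟩ := he
  simp [hρ, hy u hu]

theorem qf_add_add (hρ : ∀ (x : X) (y : Y), W.qf (ρ x : Y) y = ((W.lam x y : ℤ) : ZMod 2))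
    {y y' e e' : Y} (hy : y ∈ lamPerpY W.lam S) (hy' : y' ∈ lamPerpY W.lam S)
    (he : e ∈ S.map ((AddCommGroup.torsion Y).subtype.comp ρ))
    (he' : e' ∈ S.map ((AddCommGroup.torsion Y).subtype.comp ρ)) :
    W.qf (y + e) (y' + e') = W.qf y y' := by
  have hye' : W.qf y e' = 0 := by
    rw [W.qf_symm]
    exact W.qf_eq_zero_of_mem_map_rho ρ hρ he' hy
  simp only [map_add, AddMonoidHom.add_apply, hye', W.qf_eq_zero_of_mem_map_rho ρ hρ he hy',
    W.qf_eq_zero_of_mem_torsion (mem_torsion_of_mem_map_rho he) (mem_torsion_of_mem_map_rho he'),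
    add_zero]

theorem alpha_add_of_mem_map_rho
    (hρ : ∀ (x : X) (y : Y), W.qf (ρ x : Y) y = ((W.lam x y : ℤ) : ZMod 2))
    {y e : Y} (hy : y ∈ lamPerpY W.lam S)
    (he : e ∈ S.map ((AddCommGroup.torsion Y).subtype.comp ρ)) :
    W.alpha (y + e) = W.alpha y := by
  rw [W.alpha_add, W.alpha_eq_zero_of_mem_torsion (mem_torsion_of_mem_map_rho he), W.qf_symm,
    W.qf_eq_zero_of_mem_map_rho ρ hρ he hy, map_zero, add_zero, add_zero]

end OrthogonalSplitting

end WallPairing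

section Sequences
variable (W : WallPairing g X Y A) {β : Type*}

theorem lMem_iff {l : List (X × Y)} :
    LMem W l ↔ l ≠ [] ∧
      (∀ i j : Fin l.length, W.lam (l.get i).1 (l.get j).2 = if i = j then 1 else 0) ∧
      (∀ a ∈ l, ∀ b ∈ l, W.qf a.2 b.2 = 0) ∧ ∀ a ∈ l, W.alpha a.2 = 0 := by
  constructor
  · rintro ⟨hne, -, hδ, hq, hα⟩
    exact ⟨hne, hδ, forall_get_get_iff.1 hq, List.forall_mem_iff_get.2 hα⟩
  · rintro ⟨hne, hδ, hq, hα⟩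
    exact ⟨hne, (get_delta_iff_nodup_kroneckerOn (F := fun a b : X × Y => W.lam a.1 b.2)
      |>.1 hδ).1, hδ, forall_get_get_iff.2 hq, List.forall_mem_iff_get.1 hα⟩

theorem nodup_and_kroneckerOn_of_lMem {l : List (X × Y)} (hl : LMem W l) :
    l.Nodup ∧ KroneckerOn (fun a b : X × Y => W.lam a.1 b.2) l :=
  get_delta_iff_nodup_kroneckerOn.1 hl.2.2.1

theorem lMem_map_iff {l : List β} (f : β → X × Y) :
    LMem W (l.map f) ↔ l ≠ [] ∧
      (∀ i j : Fin l.length, W.lam (f (l.get i)).1 (f (l.get j)).2 = if i = j then 1 else 0) ∧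
      (∀ a ∈ l, ∀ b ∈ l, W.qf (f a).2 (f b).2 = 0) ∧ ∀ a ∈ l, W.alpha (f a).2 = 0 := by
  rw [lMem_iff]
  refine Iff.and (by simp) ((get_delta_map_iff (F := fun a b : X × Y => W.lam a.1 b.2) f).and
    (Iff.and ?_ ?_)) <;> simp

theorem lMem_map_congr {l : List β} {f f' : β → X × Y}
    (hlam : ∀ a ∈ l, ∀ b ∈ l, W.lam (f a).1 (f b).2 = W.lam (f' a).1 (f' b).2)
    (hq : ∀ a ∈ l, ∀ b ∈ l, W.qf (f a).2 (f b).2 = W.qf (f' a).2 (f' b).2)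
    (hα : ∀ a ∈ l, W.alpha (f a).2 = W.alpha (f' a).2) :
    LMem W (l.map f) ↔ LMem W (l.map f') := by
  rw [lMem_map_iff, lMem_map_iff]
  refine Iff.rfl.and ((forall₂_congr fun i j => ?_).and (by simp +contextual [hq, hα]))
  rw [hlam _ (List.get_mem _ _) _ (List.get_mem _ _)]

theorem lBracketMem_iff {SX SV : AddSubgroup X} {SY SR : AddSubgroup Y}
    {l : List ((X × Y) × (X × Y))} :
    LBracketMem W SX SY SV SR l ↔
      LMem W (l.map Prod.fst) ∧ ∀ r ∈ l, r.1 ∈ SX.prod SY ∧ r.2 ∈ SV.prod SR := by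
  rw [lMem_map_iff]
  simp only [AddSubgroup.mem_prod]
  constructor
  · rintro ⟨hne, -, -, hmem, hδ, hq, hα⟩
    exact ⟨⟨hne, hδ, forall_get_get_iff.1 hq, List.forall_mem_iff_get.2 hα⟩,
      List.forall_mem_iff_get.2 fun j => ⟨⟨(hmem j).1, (hmem j).2.1⟩, (hmem j).2.2⟩⟩
  · rintro ⟨⟨hne, hδ, hq, hα⟩, hmem⟩
    have hnd := (get_delta_iff_nodup_kroneckerOn (F := fun a b : X × Y => W.lam a.1 b.2)).1
      ((get_delta_map_iff (F := fun a b : X × Y => W.lam a.1 b.2) Prod.fst).2 hδ)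
    refine ⟨hne, hnd.1.of_map _, hnd.1, fun j => ?_, hδ, forall_get_get_iff.2 hq,
      List.forall_mem_iff_get.1 hα⟩
    obtain ⟨⟨ha, hc⟩, hb, he⟩ := hmem _ (List.get_mem l j)
    exact ⟨ha, hc, hb, he⟩

theorem lMem_map_add_iff (ρ : X →+ AddCommGroup.torsion Y)
    (hρ : ∀ (x : X) (y : Y), W.qf (ρ x : Y) y = ((W.lam x y : ℤ) : ZMod 2))
    {S : AddSubgroup X} {l : List ((X × Y) × (X × Y))}
    (hl : ∀ r ∈ l, r.1.2 ∈ lamPerpY W.lam S ∧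
      r.2 ∈ S.prod (S.map ((AddCommGroup.torsion Y).subtype.comp ρ))) :
    LMem W (l.map fun r => r.1 + r.2) ↔ LMem W (l.map Prod.fst) :=
  lMem_map_congr W
    (fun a ha b hb => W.lam_add_add _ (hl a ha).2.1 (hl b hb).1
      (mem_torsion_of_mem_map_rho (hl b hb).2.2))
    (fun a ha b hb => W.qf_add_add ρ hρ (hl a ha).1 (hl b hb).1 (hl a ha).2.2 (hl b hb).2.2)
    (fun a ha => W.alpha_add_of_mem_map_rho ρ hρ (hl a ha).1 (hl a ha).2.2)

end Sequences

namespace WallPairing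
variable (W : WallPairing g X Y A) {i : ℕ} (v : Fin i → X) (w : Fin i → Y)

def perpComponent (l : List (X × Y)) (y : Y) : Y :=
  y - (l.map fun p => W.lam p.1 y • p.2).sum

theorem lam_perpComponent (x : X) (l : List (X × Y)) (y : Y) :
    W.lam x (W.perpComponent l y) =
      W.lam x y - (l.map fun p => W.lam p.1 y * W.lam x p.2).sum := by
  simp [perpComponent, map_list_sum, Function.comp_def]

theorem lam_perpComponent_of_forall {x : X} {l : List (X × Y)}
    (h : ∀ p ∈ l, W.lam x p.2 = 0) (y : Y) : W.lam x (W.perpComponent l y) = W.lam x y := by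
  rw [lam_perpComponent, List.sum_eq_zero, sub_zero]
  intro a ha
  obtain ⟨p, hp, rfl⟩ := List.mem_map.1 ha
  rw [h p hp, mul_zero]

theorem lam_perpComponent_of_mem {l : List (X × Y)} (hl : l.Nodup)
    (hK : KroneckerOn (fun a b : X × Y => W.lam a.1 b.2) l) {p : X × Y} (hp : p ∈ l) (y : Y) :
    W.lam p.1 (W.perpComponent l y) = 0 := by
  classical
  rw [lam_perpComponent, ← List.sum_toFinset _ hl,
    Finset.sum_eq_single_of_mem p (List.mem_toFinset.2 hp),
    show W.lam p.1 p.2 = 1 from hK.1 p hp, mul_one, sub_self]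
  intro b hb hbp
  rw [show W.lam p.1 b.2 = 0 from hK.2 p hp b (List.mem_toFinset.1 hb) (Ne.symm hbp), mul_zero]

theorem kroneckerOn_dualList (hlam : ∀ l m, W.lam (v l) (w m) = if l = m then 1 else 0)
    {l : List (X × Y)} (hl : l.Nodup) (hK : KroneckerOn (fun a b : X × Y => W.lam a.1 b.2) l)
    (hV : ∀ p ∈ l, ∀ m, W.lam (v m) p.2 = 0) :
    KroneckerOn (fun z z' : (X × Y) × Y => W.lam z.1.1 z'.2)
      (l.map (fun p => (p, p.2)) ++ List.ofFn fun m => ((v m, 0), W.perpComponent l (w m))) := by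
  have hvw : ∀ m m', W.lam (v m) (W.perpComponent l (w m')) = if m = m' then 1 else 0 :=
    fun m m' => by rw [W.lam_perpComponent_of_forall (fun p hp => hV p hp m), hlam]
  refine ⟨fun z hz => ?_, fun z hz z' hz' hne => ?_⟩
  · rcases List.mem_append.1 hz with hz | hz
    · obtain ⟨p, hp, rfl⟩ := List.mem_map.1 hz
      exact hK.1 p hp
    · obtain ⟨m, rfl⟩ := List.mem_ofFn.1 hz
      simpa using hvw m m
  · rcases List.mem_append.1 hz with hz | hz <;> rcases List.mem_append.1 hz' with hz' | hz'
    · obtain ⟨p, hp, rfl⟩ := List.mem_map.1 hz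
      obtain ⟨p', hp', rfl⟩ := List.mem_map.1 hz'
      exact hK.2 p hp p' hp' fun h => hne (by rw [h])
    · obtain ⟨p, hp, rfl⟩ := List.mem_map.1 hz
      obtain ⟨m, rfl⟩ := List.mem_ofFn.1 hz'
      exact W.lam_perpComponent_of_mem hl hK hp _
    · obtain ⟨m, rfl⟩ := List.mem_ofFn.1 hz
      obtain ⟨p', hp', rfl⟩ := List.mem_map.1 hz'
      exact hV p' hp' m
    · obtain ⟨m, rfl⟩ := List.mem_ofFn.1 hz
      obtain ⟨m', rfl⟩ := List.mem_ofFn.1 hz'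
      simpa [show m ≠ m' by rintro rfl; exact hne rfl] using hvw m m'

theorem lam_eq_zero_of_mMem_append {l : List (X × Y)} (hl : LMem W l)
    (hM : MMem W (l ++ List.ofFn fun m => (v m, (0 : Y)))) {p : X × Y} (hp : p ∈ l) (m : Fin i) :
    W.lam (v m) p.2 = 0 := by
  obtain ⟨-, -, -, -, -, hcol, -⟩ := hM
  have hp0 : p.2 ≠ 0 := fun h0 => by
    simpa [h0] using (nodup_and_kroneckerOn_of_lMem W hl).2.1 p hp
  obtain ⟨k, hk⟩ := List.mem_iff_get.1 (List.mem_append_left _ hp)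
  obtain ⟨j, hj⟩ := List.mem_iff_get.1 (List.mem_append_right l (List.mem_ofFn.2 ⟨m, rfl⟩))
  rcases hcol k with h0 | hcol
  · exact absurd (hk ▸ h0) hp0
  · have hjk : j ≠ k := by
      rintro rfl
      exact hp0 (by rw [← hk, hj])
    have h := hcol j
    rwa [hk, hj, if_neg hjk] at h

theorem mMem_append_of (hlam : ∀ l m, W.lam (v l) (w m) = if l = m then 1 else 0)
    {l : List (X × Y)} (hl : LMem W l) (hV : ∀ p ∈ l, ∀ m, W.lam (v m) p.2 = 0) :
    MMem W (l ++ List.ofFn fun m => (v m, (0 : Y))) := by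
  obtain ⟨hne, -, hq, hα⟩ := (lMem_iff W).1 hl
  obtain ⟨hnd, hK⟩ := nodup_and_kroneckerOn_of_lMem W hl
  have hp0 : ∀ p ∈ l, p.2 ≠ 0 := fun p hp h0 => by simpa [h0] using hK.1 p hp
  have hvinj : Function.Injective v := fun a b hab => by
    by_contra hne
    have h := hlam b a
    rw [← hab, hlam, if_pos rfl, if_neg (Ne.symm hne)] at h
    exact one_ne_zero h
  set L := l ++ List.ofFn fun m => (v m, (0 : Y)) with hL
  have hmemL : ∀ a ∈ L, a ∈ l ∨ a.2 = 0 := fun a ha =>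
    (List.mem_append.1 ha).imp_right fun h => by obtain ⟨m, rfl⟩ := List.mem_ofFn.1 h; rfl
  have hLnd : L.Nodup := by
    refine List.nodup_append.2 ⟨hnd, List.nodup_ofFn.2 fun a b h => hvinj congr($h.1), ?_⟩
    intro p hp q hq hpq
    obtain ⟨m, rfl⟩ := List.mem_ofFn.1 hq
    exact hp0 p hp (by rw [hpq])
  have hzs : (l.map (fun p : X × Y => (p, p.2)) ++
      List.ofFn fun m => ((v m, 0), W.perpComponent l (w m))).map Prod.fst = L := by
    simp [L, List.map_ofFn, Function.comp_def]
  obtain ⟨hli, hC⟩ := linearIndependent_and_isCompl_of_kroneckerOn W.lam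
    (List.Nodup.of_map Prod.fst (hzs ▸ hLnd)) (W.kroneckerOn_dualList v w hlam hnd hK hV) hzs
  refine ⟨by simp [L, hne], hLnd, hli, hC,
    (List.forall_mem_iff_get (p := fun a : X × Y => W.alpha a.2 = 0)).1 fun a ha => ?_,
    get_column_delta_of_nodup (M := fun b : X × Y => b.2 = 0)
      (F := fun a b : X × Y => W.lam a.1 b.2) hLnd fun b hb => ?_,
    (forall_get_get_iff (R := fun a b : X × Y => W.qf a.2 b.2 = 0)).2 fun a ha b hb => ?_⟩
  · rcases hmemL a ha with ha | h0
    · exact hα a ha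
    · rw [h0, W.alpha_zero]
  · rcases hmemL b hb with hb | h0
    · refine Or.inr ⟨hK.1 b hb, fun a ha hab => ?_⟩
      rcases List.mem_append.1 ha with ha | ha
      · exact hK.2 a ha b hb hab
      · obtain ⟨m, rfl⟩ := List.mem_ofFn.1 ha
        exact hV b hb m
    · exact Or.inl h0
  · rcases hmemL a ha with ha | h0
    · rcases hmemL b hb with hb | h0
      · exact hq a ha b hb
      · rw [h0, map_zero]
    · rw [h0, map_zero, AddMonoidHom.zero_apply]

theorem mMem_append_iff (hlam : ∀ l m, W.lam (v l) (w m) = if l = m then 1 else 0)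
    {l : List (X × Y)} (hl : LMem W l) :
    MMem W (l ++ List.ofFn fun m => (v m, (0 : Y))) ↔
      ∀ p ∈ l, p.2 ∈ lamPerpY W.lam (AddSubgroup.closure (Set.range v)) := by
  simp only [mem_lamPerpY_closure_iff, Set.forall_mem_range]
  exact ⟨fun hM p hp m => W.lam_eq_zero_of_mMem_append v hl hM hp m, W.mMem_append_of v w hlam hl⟩

end WallPairing

namespace WallPairing
variable (W : WallPairing g X Y A) (ρ : X →+ AddCommGroup.torsion Y) {i : ℕ} (v : Fin i → X)
  (w : Fin i → Y)

local notation "𝒱" => AddSubgroup.closure (Set.range v)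
local notation "𝒲" => AddSubgroup.closure (Set.range w)
local notation "ρ(𝒱)" =>
  AddSubgroup.map (AddMonoidHom.comp (AddSubgroup.subtype (AddCommGroup.torsion Y)) ρ) 𝒱

def projV : X →+ X :=
  ∑ m, (zmultiplesHom X (v m)).comp (W.lam.flip (w m))

theorem projV_apply (x : X) : W.projV v w x = ∑ m, W.lam x (w m) • v m := by
  simp [projV]

theorem projV_mem (x : X) : W.projV v w x ∈ 𝒱 := by
  rw [projV_apply]
  exact AddSubgroup.sum_mem _ fun m _ =>
    AddSubgroup.zsmul_mem _ (AddSubgroup.subset_closure (Set.mem_range_self m)) _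

theorem sub_projV_mem (hlam : ∀ l m, W.lam (v l) (w m) = if l = m then 1 else 0) (x : X) :
    x - W.projV v w x ∈ lamPerpX W.lam 𝒲 := by
  refine mem_lamPerpX_closure_iff.2 ?_
  rintro _ ⟨m, rfl⟩
  simp [projV_apply, hlam]

theorem projV_eq_zero_of_mem {x : X} (hx : x ∈ lamPerpX W.lam 𝒲) : W.projV v w x = 0 := by
  rw [projV_apply]
  exact Finset.sum_eq_zero fun m _ => by
    rw [hx _ (AddSubgroup.subset_closure (Set.mem_range_self m)), zero_smul]

theorem projV_eq_self_of_mem (hlam : ∀ l m, W.lam (v l) (w m) = if l = m then 1 else 0)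
    {b : X} (hb : b ∈ 𝒱) : W.projV v w b = b := by
  refine AddMonoidHom.eqOn_closure (f := W.projV v w) (g := .id X) ?_ hb
  rintro _ ⟨l, rfl⟩
  simp [projV_apply, hlam]

def projT : Y →+ Y :=
  ∑ m, (W.smulTorsion (ρ (v m))).comp (W.qf.flip (w m))

theorem projT_apply (y : Y) :
    W.projT ρ v w y = ∑ m, W.smulTorsion (ρ (v m)) (W.qf y (w m)) := by
  simp [projT]

theorem projT_mem (y : Y) : W.projT ρ v w y ∈ ρ(𝒱) := by
  rw [projT_apply]
  refine AddSubgroup.sum_mem _ fun m _ => ?_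
  obtain ⟨n, hn⟩ := ZMod.intCast_surjective (W.qf y (w m))
  exact ⟨n • v m, AddSubgroup.zsmul_mem _ (AddSubgroup.subset_closure (Set.mem_range_self m)) _,
    by simp [← hn, smulTorsion_intCast]⟩

theorem sub_projT_mem (hρ : ∀ (x : X) (y : Y), W.qf (ρ x : Y) y = ((W.lam x y : ℤ) : ZMod 2))
    (hlam : ∀ l m, W.lam (v l) (w m) = if l = m then 1 else 0) {y : Y}
    (hy : y ∈ lamPerpY W.lam 𝒱) :
    y - W.projT ρ v w y ∈ lamPerpY W.lam 𝒱 ⊓ qPerp W.qf 𝒲 := by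
  have hT := mem_torsion_of_mem_map_rho (W.projT_mem ρ v w y)
  refine ⟨fun u hu => ?_, mem_qPerp_closure_iff.2 ?_⟩
  · rw [map_sub, hy u hu, W.lam_eq_zero_of_mem_torsion _ hT, sub_zero]
  · rintro _ ⟨m, rfl⟩
    simp [projT_apply, qf_smulTorsion, hρ, hlam]

theorem projT_eq_zero_of_mem {c : Y}
    (hc : c ∈ qPerp W.qf 𝒲) : W.projT ρ v w c = 0 := by
  rw [projT_apply]
  exact Finset.sum_eq_zero fun m _ => by
    rw [hc _ (AddSubgroup.subset_closure (Set.mem_range_self m)), map_zero]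

theorem projT_eq_self_of_mem
    (hρ : ∀ (x : X) (y : Y), W.qf (ρ x : Y) y = ((W.lam x y : ℤ) : ZMod 2))
    (hlam : ∀ l m, W.lam (v l) (w m) = if l = m then 1 else 0) {e : Y}
    (he : e ∈ ρ(𝒱)) :
    W.projT ρ v w e = e := by
  obtain ⟨u, hu, rfl⟩ := he
  refine AddMonoidHom.eqOn_closure
    (f := (W.projT ρ v w).comp ((AddCommGroup.torsion Y).subtype.comp ρ))
    (g := (AddCommGroup.torsion Y).subtype.comp ρ) ?_ hu
  rintro _ ⟨l, rfl⟩
  simp [projT_apply, hρ, hlam, apply_ite (W.smulTorsion _), smulTorsion_one]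

def proj : X × Y →+ X × Y := (W.projV v w).prodMap (W.projT ρ v w)

def splitEntry (p : X × Y) : (X × Y) × (X × Y) := (p - W.proj ρ v w p, W.proj ρ v w p)

theorem splitEntry_add (p : X × Y) :
    (W.splitEntry ρ v w p).1 + (W.splitEntry ρ v w p).2 = p :=
  sub_add_cancel p _

theorem splitEntry_mem (hρ : ∀ (x : X) (y : Y), W.qf (ρ x : Y) y = ((W.lam x y : ℤ) : ZMod 2))
    (hlam : ∀ l m, W.lam (v l) (w m) = if l = m then 1 else 0) {p : X × Y}
    (hp : p.2 ∈ lamPerpY W.lam 𝒱) :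
    (W.splitEntry ρ v w p).1 ∈ (lamPerpX W.lam 𝒲).prod (lamPerpY W.lam 𝒱 ⊓ qPerp W.qf 𝒲) ∧
      (W.splitEntry ρ v w p).2 ∈ AddSubgroup.prod 𝒱 ρ(𝒱) :=
  ⟨⟨W.sub_projV_mem v w hlam p.1, W.sub_projT_mem ρ v w hρ hlam hp⟩,
    ⟨W.projV_mem v w p.1, W.projT_mem ρ v w p.2⟩⟩

theorem splitEntry_of_add
    (hρ : ∀ (x : X) (y : Y), W.qf (ρ x : Y) y = ((W.lam x y : ℤ) : ZMod 2))
    (hlam : ∀ l m, W.lam (v l) (w m) = if l = m then 1 else 0) {r : (X × Y) × (X × Y)}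
    (hr₁ : r.1 ∈ (lamPerpX W.lam 𝒲).prod (lamPerpY W.lam 𝒱 ⊓ qPerp W.qf 𝒲))
    (hr₂ : r.2 ∈ AddSubgroup.prod 𝒱 ρ(𝒱)) :
    W.splitEntry ρ v w (r.1 + r.2) = r := by
  have hproj : W.proj ρ v w (r.1 + r.2) = r.2 := by
    rw [map_add]
    ext
    · simp [proj, W.projV_eq_zero_of_mem v w hr₁.1, W.projV_eq_self_of_mem v w hlam hr₂.1]
    · simp [proj, W.projT_eq_zero_of_mem ρ v w hr₁.2.2,
        W.projT_eq_self_of_mem ρ v w hρ hlam hr₂.2]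
  simp [splitEntry, hproj]


theorem map_add_map_splitEntry (l : List (X × Y)) :
    (l.map (W.splitEntry ρ v w)).map (fun r => r.1 + r.2) = l := by
  simp [Function.comp_def, splitEntry_add]

theorem lBracketMem_map_splitEntry
    (hρ : ∀ (x : X) (y : Y), W.qf (ρ x : Y) y = ((W.lam x y : ℤ) : ZMod 2))
    (hlam : ∀ l m, W.lam (v l) (w m) = if l = m then 1 else 0) {l : List (X × Y)}
    (hl : LMem W l ∧ MMem W (l ++ List.ofFn fun m => (v m, (0 : Y)))) :
    LBracketMem W (lamPerpX W.lam 𝒲) (lamPerpY W.lam 𝒱 ⊓ qPerp W.qf 𝒲) 𝒱 ρ(𝒱)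
      (l.map (W.splitEntry ρ v w)) := by
  have hV := (W.mMem_append_iff v w hlam hl.1).1 hl.2
  have hsplit := fun p (hp : p ∈ l) => W.splitEntry_mem ρ v w hρ hlam (hV p hp)
  refine (lBracketMem_iff W).2 ⟨?_, List.forall_mem_map.2 hsplit⟩
  rw [← lMem_map_add_iff W ρ hρ (List.forall_mem_map.2 fun p hp =>
    ⟨(AddSubgroup.mem_inf.1 (hsplit p hp).1.2).1, (hsplit p hp).2⟩), map_add_map_splitEntry]
  exact hl.1

theorem lMem_and_mMem_map_add
    (hρ : ∀ (x : X) (y : Y), W.qf (ρ x : Y) y = ((W.lam x y : ℤ) : ZMod 2))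
    (hlam : ∀ l m, W.lam (v l) (w m) = if l = m then 1 else 0) {l : List ((X × Y) × (X × Y))}
    (hl : LBracketMem W (lamPerpX W.lam 𝒲) (lamPerpY W.lam 𝒱 ⊓ qPerp W.qf 𝒲) 𝒱 ρ(𝒱) l) :
    LMem W (l.map fun r => r.1 + r.2) ∧
      MMem W ((l.map fun r => r.1 + r.2) ++ List.ofFn fun m => (v m, (0 : Y))) := by
  obtain ⟨hL, hmem⟩ := (lBracketMem_iff W).1 hl
  have hc : ∀ r ∈ l, r.1.2 ∈ lamPerpY W.lam 𝒱 := fun r hr =>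
    (AddSubgroup.mem_inf.1 (hmem r hr).1.2).1
  have hL' := (lMem_map_add_iff W ρ hρ fun r hr => ⟨hc r hr, (hmem r hr).2⟩).2 hL
  refine ⟨hL', (W.mMem_append_iff v w hlam hL').2 (List.forall_mem_map.2 fun r hr => ?_)⟩
  exact add_mem (hc r hr) fun u _ =>
    W.lam_eq_zero_of_mem_torsion u (mem_torsion_of_mem_map_rho (hmem r hr).2.2)

theorem map_splitEntry_map_add
    (hρ : ∀ (x : X) (y : Y), W.qf (ρ x : Y) y = ((W.lam x y : ℤ) : ZMod 2))
    (hlam : ∀ l m, W.lam (v l) (w m) = if l = m then 1 else 0) {l : List ((X × Y) × (X × Y))}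
    (hl : LBracketMem W (lamPerpX W.lam 𝒲) (lamPerpY W.lam 𝒱 ⊓ qPerp W.qf 𝒲) 𝒱 ρ(𝒱) l) :
    (l.map fun r => r.1 + r.2).map (W.splitEntry ρ v w) = l := by
  have hmem := ((lBracketMem_iff W).1 hl).2
  rw [List.map_map]
  exact (List.map_congr_left fun r hr =>
    W.splitEntry_of_add ρ v w hρ hlam (hmem r hr).1 (hmem r hr).2).trans (List.map_id l)

end WallPairing

theorem L_inter_M_res_orderIso_general (W : WallPairing g X Y A)
    (ρ : X →+ AddCommGroup.torsion Y)
    (hρ : ∀ (x : X) (y : Y), W.qf (ρ x : Y) y = ((W.lam x y : ℤ) : ZMod 2))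
    (i : ℕ) (v : Fin i → X) (w : Fin i → Y)
    (hlam : ∀ l m, W.lam (v l) (w m) = if l = m then 1 else 0) :
    ∃ e : ListPoset (fun l : List (X × Y) =>
            LMem W l ∧ MMem W (l ++ List.ofFn fun m : Fin i => (v m, (0 : Y)))) ≃o
          ListPoset (LBracketMem W
            (lamPerpX W.lam (AddSubgroup.closure (Set.range w)))
            (lamPerpY W.lam (AddSubgroup.closure (Set.range v)) ⊓
              qPerp W.qf (AddSubgroup.closure (Set.range w)))
            (AddSubgroup.closure (Set.range v))
            ((AddSubgroup.closure (Set.range v)).map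
              ((AddCommGroup.torsion Y).subtype.comp ρ))),
      ∀ u, ((e u).val.map fun p => (p.1.1 + p.2.1, p.1.2 + p.2.2)) = u.val :=
  ⟨ListPoset.mapOrderIso (W.splitEntry ρ v w) (fun r => r.1 + r.2)
      (fun _ hl => W.lBracketMem_map_splitEntry ρ v w hρ hlam hl)
      (fun _ hl => W.lMem_and_mMem_map_add ρ v w hρ hlam hl)
      (fun l _ => W.map_add_map_splitEntry ρ v w l)
      (fun _ hl => W.map_splitEntry_map_add ρ v w hρ hlam hl),
    fun u => W.map_add_map_splitEntry ρ v w u.val⟩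

/-- With `v = ((v_1,0),…,(v_i,0))`, there is an order-isomorphism of posets
`L(X,Y) ∩ M(X,Y)_v ≅ L(W^⊥, V^⊥ ∩ Ŵ)⟨V × ρ(V)⟩`, obtained by decomposing each
`x_j = a_j + b_j` (`a_j ∈ W^⊥`, `b_j ∈ V`) and `y_j = c_j + e_j` (`c_j ∈ V^⊥ ∩ Ŵ`,
`e_j ∈ ρ(V)`); i.e. the inverse of the isomorphism is induced by the entrywise sum map
`((a,c),(b,e)) ↦ (a + b, c + e)`. -/
theorem L_inter_M_res_orderIso (W : WallPairing g X Y A)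
    (ρ : X →+ AddCommGroup.torsion Y)
    (hρ : ∀ (x : X) (y : Y), W.qf (ρ x : Y) y = ((W.lam x y : ℤ) : ZMod 2))
    (i : ℕ) (v : Fin i → X) (w : Fin i → Y)
    (hlam : ∀ l m, W.lam (v l) (w m) = if l = m then 1 else 0)
    (hq : ∀ l m, W.qf (w l) (w m) = 0) (halpha : ∀ l, W.alpha (w l) = 0) :
    ∃ e : ListPoset (fun l : List (X × Y) =>
            LMem W l ∧ MMem W (l ++ List.ofFn fun m : Fin i => (v m, (0 : Y)))) ≃o
          ListPoset (LBracketMem W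
            (lamPerpX W.lam (AddSubgroup.closure (Set.range w)))
            (lamPerpY W.lam (AddSubgroup.closure (Set.range v)) ⊓
              qPerp W.qf (AddSubgroup.closure (Set.range w)))
            (AddSubgroup.closure (Set.range v))
            ((AddSubgroup.closure (Set.range v)).map
              ((AddCommGroup.torsion Y).subtype.comp ρ))),
      ∀ u, ((e u).val.map fun p => (p.1.1 + p.2.1, p.1.2 + p.2.2)) = u.val :=
  L_inter_M_res_orderIso_general W ρ hρ i v w hlam

end
end
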